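/- For every a > 1 there exist w ≥ 2, ε₀ ∈ (0,1), s ∈ (0,1) and R₀ ∈ ℕ such that for all R ≥ R₀ the function f : ℤ → [0,∞), f(x) = min{(ε₀ + x/⌈wR⌉)·1_{x≥0}, 1}, satisfies: (i) f(x) = 0 for x < 0, f(0) = ε₀, f(x) = 1 for x ≥ ⌈wR⌉; and (ii) a·δ_R(x;f) ≥ f(x + ⌈sR⌉) for all x ∈ ℤ. -/

import Mathlib

/-!
Put `b = min a 2` and `β = 1 - b⁻¹`, so that `b (1 - β) = 1`, and take `w = 4/β`, `s = β/4`,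
`ε₀ = β²/16`. Write `W = ⌈wR⌉`, `S = ⌈sR⌉`; for `R ≥ 8/β` we get `2R ≤ βW` and
`ε₀ W + S ≤ βR - 1`. Compare `f(x + S) ≤ ε₀ + (x + S)/W` with the window average:
if the window reaches past `W`, every point of it is beyond `W - 2R`, so the average is at least
`1 - 2R/W ≥ 1/b`; if the window lies in `[0, W]`, the average is at least `x/W`; and if it straddles
`0`, the sum `∑_{0 ≤ y ≤ x+R} y/W` gives a quadratic lower bound whose discriminant is negative
for `1 < b ≤ 2`.
-/

/-- One-dimensional window average: `δ_R(x;f) = (2R+1)^{-1} Σ_{y=x−R}^{x+R} f(y)`. -/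
noncomputable def dens1 (R : ℕ) (f : ℤ → ℝ) (x : ℤ) : ℝ :=
  (2 * R + 1 : ℝ)⁻¹ * ∑ y ∈ Finset.Icc (x - (R : ℤ)) (x + (R : ℤ)), f y

open Finset

noncomputable def linearWave (ε W : ℝ) (x : ℤ) : ℝ :=
  min ((ε + (x : ℝ) / W) * (if 0 ≤ x then 1 else 0)) 1

section linearWave

variable {ε W : ℝ} {x : ℤ}

theorem linearWave_of_neg (hx : x < 0) : linearWave ε W x = 0 := by
  simp [linearWave, not_le.mpr hx]

theorem linearWave_of_nonneg (hx : 0 ≤ x) : linearWave ε W x = min (ε + x / W) 1 := by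
  simp [linearWave, hx]

theorem linearWave_zero (hε : ε ≤ 1) : linearWave ε W 0 = ε := by
  simp [linearWave_of_nonneg le_rfl, hε]

theorem linearWave_le_one : linearWave ε W x ≤ 1 := min_le_right _ _

theorem linearWave_le_add_div (hx : 0 ≤ x) : linearWave ε W x ≤ ε + x / W := by
  rw [linearWave_of_nonneg hx]
  exact min_le_left _ _

theorem min_div_le_linearWave (hε : 0 ≤ ε) (hx : 0 ≤ x) :
    min (x / W) 1 ≤ linearWave ε W x := by
  rw [linearWave_of_nonneg hx]
  gcongr
  linarith

theorem div_le_linearWave (hε : 0 ≤ ε) (hx : 0 ≤ x) (hxW : x ≤ W) :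
    x / W ≤ linearWave ε W x := by
  have hx' : (0 : ℝ) ≤ x := by exact_mod_cast hx
  have h := min_div_le_linearWave (W := W) hε hx
  rwa [min_eq_left (div_le_one_of_le₀ hxW (hx'.trans hxW))] at h

theorem linearWave_nonneg (hε : 0 ≤ ε) (hW : 0 ≤ W) : 0 ≤ linearWave ε W x := by
  rcases lt_or_ge x 0 with hx | hx
  · rw [linearWave_of_neg hx]
  · exact (le_min (div_nonneg (by exact_mod_cast hx) hW) zero_le_one).trans
      (min_div_le_linearWave hε hx)

theorem linearWave_of_le (hε : 0 ≤ ε) (hW : 0 < W) (hx : W ≤ x) : linearWave ε W x = 1 := by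
  refine le_antisymm linearWave_le_one ?_
  have h := min_div_le_linearWave (W := W) hε (x := x) (by exact_mod_cast hW.le.trans hx)
  rwa [min_eq_right ((one_le_div hW).mpr hx)] at h

end linearWave

theorem sum_Icc_intCast {m n : ℤ} (h : m ≤ n + 1) :
    ∑ y ∈ Icc m n, (y : ℝ) = (n - m + 1) * (m + n) / 2 := by
  induction n, (by omega : m - 1 ≤ n) using Int.leInduction with
  | base => simp
  | succ n hn ih =>
    rw [← insert_Icc_right_eq_Icc_add_one (by omega), sum_insert (by simp), ih (by omega)]
    push_cast
    ring

theorem dens1_nonneg {R : ℕ} {f : ℤ → ℝ} (hf : ∀ y, 0 ≤ f y) (x : ℤ) : 0 ≤ dens1 R f x :=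
  mul_nonneg (by positivity) (sum_nonneg fun y _ => hf y)

theorem le_dens1_of_forall_le {R : ℕ} {f : ℤ → ℝ} {x : ℤ} {c : ℝ}
    (hc : ∀ y ∈ Icc (x - R) (x + R), c ≤ f y) : c ≤ dens1 R f x := by
  have hcard : #(Icc (x - R) (x + R)) = 2 * R + 1 := by
    rw [Int.card_Icc]
    omega
  have h := card_nsmul_le_sum _ _ _ hc
  rw [nsmul_eq_mul, hcard] at h
  push_cast at h
  rwa [dens1, le_inv_mul_iff₀ (by positivity)]

section windowBounds

variable {ε : ℝ} {R W : ℕ} {x : ℤ}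

theorem sub_div_le_dens1_linearWave (hε : 0 ≤ ε) (h2R : 2 * R ≤ W) (hx : (W : ℤ) < x + R) :
    (W - 2 * R : ℝ) / W ≤ dens1 R (linearWave ε W) x := by
  refine le_dens1_of_forall_le fun y hy => ?_
  rw [mem_Icc] at hy
  have hy' : (W - 2 * R : ℝ) ≤ y := by exact_mod_cast (by omega : (W : ℤ) - 2 * R ≤ y)
  calc (W - 2 * R : ℝ) / W = min ((W - 2 * R : ℝ) / W) 1 :=
        (min_eq_left (div_le_one_of_le₀ (by linarith) W.cast_nonneg)).symm
    _ ≤ min ((y : ℝ) / W) 1 := by gcongr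
    _ ≤ linearWave ε W y := min_div_le_linearWave hε (by omega)

theorem div_le_dens1_linearWave (hε : 0 ≤ ε) (hRx : R ≤ x) (hxW : x + R ≤ W) :
    x / W ≤ dens1 R (linearWave ε W) x := by
  have hsum : ∑ y ∈ Icc (x - R) (x + R), (y : ℝ) / W = (2 * R + 1) * (x / W) := by
    rw [← sum_div, sum_Icc_intCast (by omega)]
    push_cast
    ring
  calc (x / W : ℝ) = (2 * R + 1 : ℝ)⁻¹ * ∑ y ∈ Icc (x - R) (x + R), (y : ℝ) / W := by
        rw [hsum, inv_mul_cancel_left₀ (by positivity)]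
    _ ≤ dens1 R (linearWave ε W) x := by
        rw [dens1]
        gcongr with y hy
        rw [mem_Icc] at hy
        exact div_le_linearWave hε (by omega) (by exact_mod_cast (by omega : y ≤ W))

theorem triangle_le_dens1_linearWave (hε : 0 ≤ ε) (h0 : 0 ≤ x + R) (hxR : x ≤ R)
    (hxW : x + R ≤ W) :
    (x + R) * (x + R + 1) / (2 * W * (2 * R + 1)) ≤ dens1 R (linearWave ε W) x := by
  have hsum : ∑ y ∈ Icc 0 (x + R), (y : ℝ) / W = (x + R) * (x + R + 1) / (2 * W) := by
    rw [← sum_div, sum_Icc_intCast (by omega)]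
    push_cast
    ring
  rw [← div_div, ← hsum, div_eq_inv_mul, dens1]
  gcongr
  calc ∑ y ∈ Icc 0 (x + R), (y : ℝ) / W ≤ ∑ y ∈ Icc 0 (x + R), linearWave ε W y :=
        sum_le_sum fun y hy => div_le_linearWave hε (mem_Icc.mp hy).1
          (by exact_mod_cast (mem_Icc.mp hy).2.trans hxW)
    _ ≤ ∑ y ∈ Icc (x - R) (x + R), linearWave ε W y :=
        sum_le_sum_of_subset_of_nonneg (Icc_subset_Icc (by omega) le_rfl)
          fun y _ _ => linearWave_nonneg hε W.cast_nonneg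

end windowBounds

-- Multiplied by `b`, this is a quadratic in `bN` with discriminant `(2ρ+1)(1-3b) + b²/4 < 0`.
theorem add_sub_mul_le_mul_triangle {b ρ e N : ℝ} (hb : 1 < b) (hb2 : b ≤ 2) (hρ : 0 ≤ ρ)
    (he : e ≤ (1 - b⁻¹) * ρ - 1) : (e + N - ρ) * (2 * ρ + 1) ≤ b * (N * (N + 1) / 2) := by
  have hb0 : 0 < b := by linarith
  have h : b * e ≤ (b - 1) * ρ - b := by
    have := mul_le_mul_of_nonneg_left he hb0.le
    rwa [mul_sub, ← mul_assoc, mul_sub, mul_one, mul_inv_cancel₀ hb0.ne'] at this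
  nlinarith [sq_nonneg (b * N + b / 2 - (2 * ρ + 1)),
    mul_le_mul_of_nonneg_right h (by linarith : (0 : ℝ) ≤ 2 * ρ + 1)]

theorem linearWave_add_le_mul_dens1 {b ε : ℝ} {R S W : ℕ} (hb : 1 < b) (hb2 : b ≤ 2)
    (hε : 0 ≤ ε) (hW : 2 * (R : ℝ) ≤ (1 - b⁻¹) * W) (hS : ε * W + S ≤ (1 - b⁻¹) * R - 1)
    (x : ℤ) : linearWave ε W (x + S) ≤ b * dens1 R (linearWave ε W) x := by
  have hb0 : 0 < b := zero_lt_one.trans hb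
  have hβ : b * (1 - b⁻¹) = b - 1 := by field_simp
  have hεW : 0 ≤ ε * W := mul_nonneg hε W.cast_nonneg
  have hR : 1 ≤ R := by exact_mod_cast (by nlinarith : (1 : ℝ) ≤ R)
  have h2R : 2 * R ≤ W := by exact_mod_cast (by nlinarith : 2 * (R : ℝ) ≤ W)
  have hSR : S ≤ R := by exact_mod_cast (by nlinarith : (S : ℝ) ≤ R)
  have hW0 : (0 : ℝ) < W := by exact_mod_cast (by omega : 0 < W)
  have hdens := dens1_nonneg (R := R) (fun y => linearWave_nonneg (x := y) hε hW0.le) x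
  rcases lt_or_ge (x + S) 0 with hneg | hxS
  · rw [linearWave_of_neg hneg]
    positivity
  have hwave : linearWave ε W (x + S) ≤ ε + (x + S : ℝ) / W := by
    exact_mod_cast linearWave_le_add_div (ε := ε) (W := W) hxS
  rcases lt_or_ge (W : ℤ) (x + R) with hsat | hramp
  · calc linearWave ε W (x + S) ≤ 1 := linearWave_le_one
      _ ≤ b * ((W - 2 * R : ℝ) / W) := by
        rw [mul_div_assoc', le_div_iff₀ hW0]
        nlinarith [mul_le_mul_of_nonneg_left hW hb0.le]
      _ ≤ b * dens1 R (linearWave ε W) x :=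
        mul_le_mul_of_nonneg_left (sub_div_le_dens1_linearWave hε h2R hsat) hb0.le
  rcases le_total (R : ℤ) x with hRx | hxR
  · calc linearWave ε W (x + S) ≤ ε + (x + S : ℝ) / W := hwave
      _ ≤ b * (x / W) := by
        have hRx' : (R : ℝ) ≤ x := by exact_mod_cast hRx
        rw [mul_div_assoc', le_div_iff₀ hW0, add_mul, div_mul_cancel₀ _ hW0.ne']
        nlinarith
      _ ≤ b * dens1 R (linearWave ε W) x :=
        mul_le_mul_of_nonneg_left (div_le_dens1_linearWave hε hRx hramp) hb0.le
  · have key := add_sub_mul_le_mul_triangle hb hb2 R.cast_nonneg (N := x + R) hS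
    calc linearWave ε W (x + S) ≤ ε + (x + S : ℝ) / W := hwave
      _ ≤ b * ((x + R) * (x + R + 1) / (2 * W * (2 * R + 1))) := by
        rw [mul_div_assoc', le_div_iff₀ (by positivity)]
        have : (ε + (x + S : ℝ) / W) * (2 * W * (2 * R + 1))
            = 2 * ((ε * W + S + (x + R) - R) * (2 * R + 1)) := by
          field_simp
          ring
        linarith
      _ ≤ b * dens1 R (linearWave ε W) x :=
        mul_le_mul_of_nonneg_left (triangle_le_dens1_linearWave hε (by omega) hxR hramp) hb0.le

theorem width_shift_bounds {β : ℝ} {R : ℕ} (hβ0 : 0 < β) (hβ : β ≤ 1 / 2) (hR : 8 ≤ β * R) :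
    2 * (R : ℝ) ≤ β * ⌈4 / β * (R : ℝ)⌉₊ ∧
      β ^ 2 / 16 * ⌈4 / β * (R : ℝ)⌉₊ + ⌈β / 4 * (R : ℝ)⌉₊ ≤ β * R - 1 := by
  have hW := Nat.le_ceil (4 / β * (R : ℝ))
  have hW' := Nat.ceil_lt_add_one (by positivity : 0 ≤ 4 / β * (R : ℝ))
  have hS' := Nat.ceil_lt_add_one (by positivity : 0 ≤ β / 4 * (R : ℝ))
  have hβW : β * (4 / β * R) = 4 * R := by field_simp
  constructor
  · nlinarith [mul_le_mul_of_nonneg_left hW hβ0.le]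
  · nlinarith [mul_le_mul_of_nonneg_left hW'.le (by positivity : 0 ≤ β ^ 2 / 16)]

/-- For every `a > 1` there exist `w ≥ 2`, `ε₀ ∈ (0,1)`, `s ∈ (0,1)` and `R₀` such that
for all `R ≥ R₀` the function `f(x) = min{(ε₀ + x/⌈wR⌉)·1_{x≥0}, 1}` is a linear
travelling wave shape: `f(x) = 0` for `x < 0`, `f(0) = ε₀`, `f(x) = 1` for `x ≥ ⌈wR⌉`,
and `a·δ_R(x;f) ≥ f(x + ⌈sR⌉)` for all `x ∈ ℤ`. -/
theorem stmt13 (a : ℝ) (ha : 1 < a) :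
    ∃ w : ℝ, 2 ≤ w ∧ ∃ ε₀ ∈ Set.Ioo (0 : ℝ) 1, ∃ s ∈ Set.Ioo (0 : ℝ) 1, ∃ R₀ : ℕ,
      ∀ R : ℕ, R₀ ≤ R → ∀ f : ℤ → ℝ,
        (f = fun x : ℤ =>
          min ((ε₀ + (x : ℝ) / (⌈w * (R : ℝ)⌉₊ : ℝ)) * (if 0 ≤ x then 1 else 0)) 1) →
        (∀ x : ℤ, x < 0 → f x = 0) ∧ f 0 = ε₀ ∧
        (∀ x : ℤ, (⌈w * (R : ℝ)⌉₊ : ℤ) ≤ x → f x = 1) ∧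
        (∀ x : ℤ, f (x + (⌈s * (R : ℝ)⌉₊ : ℤ)) ≤ a * dens1 R f x) := by
  set b := min a 2
  have hb : 1 < b := lt_min ha one_lt_two
  have hb2 : b ≤ 2 := min_le_right a 2
  set β := 1 - b⁻¹
  have hβ0 : 0 < β := sub_pos.mpr (inv_lt_one_of_one_lt₀ hb)
  have hβ : β ≤ 1 / 2 := by linarith [inv_anti₀ (by linarith) hb2]
  refine ⟨4 / β, by rw [le_div_iff₀ hβ0]; linarith, β ^ 2 / 16, ⟨by positivity, by nlinarith⟩,
    β / 4, ⟨by positivity, by linarith⟩, ⌈8 / β⌉₊, fun R hR f hf => ?_⟩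
  obtain rfl : f = linearWave (β ^ 2 / 16) ⌈4 / β * (R : ℝ)⌉₊ := hf
  have hβR : 8 ≤ β * R := by
    rw [← div_le_iff₀' hβ0]
    exact (Nat.le_ceil _).trans (by exact_mod_cast hR)
  obtain ⟨hW, hS⟩ := width_shift_bounds hβ0 hβ hβR
  have hε : 0 ≤ β ^ 2 / 16 := by positivity
  have hW0 : (0 : ℝ) < ⌈4 / β * (R : ℝ)⌉₊ := by nlinarith
  refine ⟨fun x => linearWave_of_neg, linearWave_zero (by nlinarith),
    fun x hx => linearWave_of_le hε hW0 (by exact_mod_cast hx), fun x => ?_⟩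
  calc _ ≤ b * dens1 R _ x := linearWave_add_le_mul_dens1 hb hb2 hε (by linarith) hS x
    _ ≤ a * dens1 R _ x := by
      gcongr
      · exact dens1_nonneg (fun y => linearWave_nonneg hε hW0.le) x
      · exact min_le_left a 2
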